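/- arXiv:1806.00266 — 3 statements merged into one kernel-verified Lean document; each statement's English description precedes it below -/
import Mathlib

section
/- Let x ∈ R^n and x' ∈ R^ℓ satisfy |x|² + |x'|² = 1, and let σ(x) = I - (1-√(1-|x|²)) x xᵀ/|x|² 1(|x|>0). Define the n×ℓ matrix D = -x (x')ᵀ (1-|x|²)^{-1/2} 1(|x|<1) + x zᵀ 1(|x|=1) for a fixed unit vector z ∈ R^ℓ. Then the n×(n+ℓ) block matrix A = [σ(x), D] satisfies A Aᵀ = I. -/
lemma vv_mul_vv {m n p : Type*} [Fintype m] [DecidableEq m] (a : n → ℝ) (b c : m → ℝ)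
    (d : p → ℝ) :
    Matrix.vecMulVec a b * Matrix.vecMulVec c d = (∑ k, b k * c k) • Matrix.vecMulVec a d := by
  ext i j
  simp only [Matrix.mul_apply, Matrix.vecMulVec_apply, Matrix.smul_apply, smul_eq_mul,
    Finset.sum_mul]
  exact Finset.sum_congr rfl fun k _ => by ring

lemma vv_transpose {m n : Type*} (a : n → ℝ) (b : m → ℝ) :
    (Matrix.vecMulVec a b).transpose = Matrix.vecMulVec b a := by
  ext i j; simp [Matrix.vecMulVec_apply, mul_comm]

/-- With `|x|² + |x'|² = 1`, `σ(x)` as defined, and the `n×ℓ` matrix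
`D = -x x'ᵀ (1-|x|²)^{-1/2} 1(|x|<1) + x zᵀ 1(|x|=1)` for a fixed unit vector `z`,
the block matrix `A = [σ(x), D]` satisfies `A Aᵀ = I`. -/
theorem stmt3 (n ℓ : ℕ) (x : Fin n → ℝ) (x' : Fin ℓ → ℝ)
    (hxx' : (∑ i, x i ^ 2) + (∑ j, x' j ^ 2) = 1)
    (z : Fin ℓ → ℝ) (hz : ∑ j, z j ^ 2 = 1)
    (σ : Matrix (Fin n) (Fin n) ℝ)
    (hσ : σ = 1 - (if 0 < ∑ i, x i ^ 2 then
        (1 - Real.sqrt (1 - ∑ i, x i ^ 2)) / (∑ i, x i ^ 2) else 0) •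
        Matrix.vecMulVec x x)
    (D : Matrix (Fin n) (Fin ℓ) ℝ)
    (hD : D = (if ∑ i, x i ^ 2 < 1 then -(Real.sqrt (1 - ∑ i, x i ^ 2))⁻¹ else 0) •
          Matrix.vecMulVec x x'
        + (if ∑ i, x i ^ 2 = 1 then (1 : ℝ) else 0) • Matrix.vecMulVec x z)
    (A : Matrix (Fin n) (Fin n ⊕ Fin ℓ) ℝ) (hA : A = Matrix.fromCols σ D) :
    A * A.transpose = 1 := by
  subst hA
  rw [Matrix.transpose_fromCols, Matrix.fromCols_mul_fromRows]
  set s : ℝ := ∑ i, x i ^ 2 with hs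
  have hxs : ∑ k, x k * x k = s := by simp [hs, sq]
  have hx's : ∑ k, x' k * x' k = 1 - s := by
    have := hxx'; simp only [sq] at this ⊢; linarith
  have hzs : ∑ k, z k * z k = 1 := by simpa [sq] using hz
  have hs0 : 0 ≤ s := Finset.sum_nonneg fun i _ => sq_nonneg _
  have hs1 : s ≤ 1 := by
    nlinarith [Finset.sum_nonneg (fun j _ => sq_nonneg (x' j)) (s := Finset.univ)]
  rcases eq_or_lt_of_le hs0 with h0 | h0
  · -- s = 0 : x = 0
    have hx : ∀ i, x i = 0 := by
      intro i
      have := Finset.sum_eq_zero_iff_of_nonneg (fun i (_ : i ∈ Finset.univ) => sq_nonneg (x i))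
      rw [← hs, ← h0] at this
      exact pow_eq_zero_iff (n := 2) (by norm_num) |>.mp (this.mp rfl i (Finset.mem_univ i))
    have hP : Matrix.vecMulVec x x = 0 := by ext i j; simp [Matrix.vecMulVec_apply, hx]
    have hV : Matrix.vecMulVec x x' = 0 := by ext i j; simp [Matrix.vecMulVec_apply, hx]
    have hW : Matrix.vecMulVec x z = 0 := by ext i j; simp [Matrix.vecMulVec_apply, hx]
    rw [hσ, hD, hP, hV, hW]
    simp
  · rcases eq_or_lt_of_le hs1 with h1 | h1
    · -- s = 1
      have hsq : Real.sqrt (1 - s) = 0 := by rw [h1]; simp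
      rw [hσ, hD, if_pos h0, if_neg (by simp [h1]), if_pos h1, hsq]
      simp only [Matrix.transpose_sub, Matrix.transpose_add, Matrix.transpose_smul,
        Matrix.transpose_one, vv_transpose, sub_mul, mul_sub, add_mul, mul_add, one_mul,
        mul_one, Matrix.smul_mul, Matrix.mul_smul, vv_mul_vv, smul_smul, hxs, hx's, hzs,
        zero_smul, smul_zero, add_zero, zero_add, sub_zero, one_smul, h1, div_one]
      match_scalars <;> ring
    · -- 0 < s < 1
      set t : ℝ := Real.sqrt (1 - s) with ht
      have ht2 : t * t = 1 - s := Real.mul_self_sqrt (by linarith)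
      have htpos : 0 < t := Real.sqrt_pos.mpr (by linarith)
      rw [hσ, hD, if_pos h0, if_pos h1, if_neg (ne_of_lt h1)]
      simp only [Matrix.transpose_sub, Matrix.transpose_add, Matrix.transpose_smul,
        Matrix.transpose_one, vv_transpose, sub_mul, mul_sub, add_mul, mul_add, one_mul,
        mul_one, Matrix.smul_mul, Matrix.mul_smul, vv_mul_vv, smul_smul, hxs, hx's, hzs,
        zero_smul, smul_zero, add_zero, zero_add, sub_zero, one_smul]
      match_scalars
      · ring
      · field_simp
        nlinarith [ht2]
end

section
/- The function x ↦ γ(|x|) σ(x), where γ : [0,1] → (0,∞) is Lipschitz and σ(x) = I - (1-√(1-|x|²)) x xᵀ/|x|² (σ(0)=I), is locally Lipschitz on the open unit ball {x ∈ R^n : |x| < 1} but σ is not Lipschitz on the closed unit ball B^n when n ≥ 1. -/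
/-!
On the open ball, `σ` agrees with the rationalized form `I - x xᵀ / (1 + √(1 - |x|²))`, which is
smooth there and hence locally Lipschitz; multiplying by the bounded Lipschitz factor `γ(|x|)`
keeps it Lipschitz on bounded sets. On the boundary, the diagonal entry `σ(t e₁)₁₁ = √(1 - t²)`
vanishes like a square root as `t → 1`, which no Lipschitz bound can control.
-/

open Set Metric Bornology Matrix
open scoped NNReal

section LipschitzSMul

variable {α 𝕜 E : Type*} [PseudoMetricSpace α] [SeminormedRing 𝕜] [SeminormedAddCommGroup E]
  [Module 𝕜 E] [IsBoundedSMul 𝕜 E] {s : Set α} {f : α → 𝕜} {g : α → E} {Kf Kg : ℝ≥0}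

theorem LipschitzOnWith.isBounded_image {β : Type*} [PseudoMetricSpace β] {K : ℝ≥0} {h : α → β}
    (hh : LipschitzOnWith K h s) (hs : IsBounded s) : IsBounded (h '' s) := by
  obtain ⟨C, hC⟩ := isBounded_iff.mp hs
  refine isBounded_iff.mpr ⟨K * C, ?_⟩
  rintro _ ⟨x, hx, rfl⟩ _ ⟨y, hy, rfl⟩
  exact (hh.dist_le_mul x hx y hy).trans (by gcongr; exact hC hx hy)

theorem LipschitzOnWith.smul_of_norm_le {Mf Mg : ℝ≥0} (hf : LipschitzOnWith Kf f s)
    (hg : LipschitzOnWith Kg g s) (hfM : ∀ x ∈ s, ‖f x‖ ≤ Mf) (hgM : ∀ x ∈ s, ‖g x‖ ≤ Mg) :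
    LipschitzOnWith (Mf * Kg + Kf * Mg) (fun x => f x • g x) s := by
  refine .of_dist_le_mul fun x hx y hy => ?_
  rw [dist_eq_norm]
  calc ‖f x • g x - f y • g y‖ = ‖f x • (g x - g y) + (f x - f y) • g y‖ := by
        rw [smul_sub, sub_smul, sub_add_sub_cancel]
    _ ≤ ‖f x‖ * ‖g x - g y‖ + ‖f x - f y‖ * ‖g y‖ :=
        (norm_add_le _ _).trans (add_le_add (norm_smul_le _ _) (norm_smul_le _ _))
    _ ≤ Mf * (Kg * dist x y) + (Kf * dist x y) * Mg := by
        rw [← dist_eq_norm, ← dist_eq_norm]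
        gcongr
        exacts [hfM x hx, hg.dist_le_mul x hx y hy, hf.dist_le_mul x hx y hy, hgM y hy]
    _ = ↑(Mf * Kg + Kf * Mg) * dist x y := by push_cast; ring

theorem LipschitzOnWith.exists_smul_of_isBounded (hf : LipschitzOnWith Kf f s)
    (hg : LipschitzOnWith Kg g s) (hs : IsBounded s) :
    ∃ K, LipschitzOnWith K (fun x => f x • g x) s := by
  obtain ⟨Mf, hMf⟩ := (hf.isBounded_image hs).exists_norm_le
  obtain ⟨Mg, hMg⟩ := (hg.isBounded_image hs).exists_norm_le
  exact ⟨_, hf.smul_of_norm_le hg (Mf := Mf.toNNReal) (Mg := Mg.toNNReal)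
    (fun x hx => (hMf _ ⟨x, hx, rfl⟩).trans (Real.le_coe_toNNReal _))
    (fun x hx => (hMg _ ⟨x, hx, rfl⟩).trans (Real.le_coe_toNNReal _))⟩

end LipschitzSMul

theorem exists_lipschitzWith_sqrt_sum_sq (ι : Type*) [Fintype ι] :
    ∃ K, LipschitzWith K (fun y : ι → ℝ => √(∑ i, y i ^ 2)) :=
  ⟨_, by
    convert lipschitzWith_one_norm.comp (PiLp.lipschitzWith_toLp 2 fun _ : ι => ℝ) using 1
    ext y
    simp [EuclideanSpace.norm_eq]⟩

section Sigma

variable {ι : Type*} [Fintype ι] [DecidableEq ι]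

noncomputable def sigmaMap (x : ι → ℝ) : ι → ι → ℝ :=
  (1 : Matrix ι ι ℝ) -
    (if 0 < ∑ i, x i ^ 2 then (1 - √(1 - ∑ i, x i ^ 2)) / (∑ i, x i ^ 2) else 0) •
      vecMulVec x x

noncomputable def sigmaSmooth (x : ι → ℝ) : ι → ι → ℝ :=
  (1 : Matrix ι ι ℝ) - (1 + √(1 - ∑ i, x i ^ 2))⁻¹ • vecMulVec x x

theorem one_sub_sqrt_one_sub_div {q : ℝ} (hq0 : 0 < q) (hq1 : q ≤ 1) :
    (1 - √(1 - q)) / q = (1 + √(1 - q))⁻¹ := by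
  have hs : √(1 - q) ^ 2 = 1 - q := Real.sq_sqrt (by linarith)
  rw [div_eq_iff hq0.ne', eq_comm, inv_mul_eq_iff_eq_mul₀ (by positivity)]
  nlinarith

theorem sigmaMap_eq_sigmaSmooth {x : ι → ℝ} (hx : ∑ i, x i ^ 2 ≤ 1) :
    sigmaMap x = sigmaSmooth x := by
  unfold sigmaMap sigmaSmooth
  split_ifs with hpos
  · rw [one_sub_sqrt_one_sub_div hpos hx]
  · have hx0 : x = 0 := by
      have := (Fintype.sum_eq_zero_iff_of_nonneg fun i => sq_nonneg (x i)).mp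
        (le_antisymm (not_lt.mp hpos) (by positivity))
      funext i
      simpa using congrFun this i
    rw [hx0, zero_vecMulVec, smul_zero, smul_zero]

theorem contDiffAt_sigmaSmooth {x : ι → ℝ} (hx : ∑ i, x i ^ 2 < 1) {n : WithTop ℕ∞} :
    ContDiffAt ℝ n (sigmaSmooth (ι := ι)) x := by
  have hq : ContDiff ℝ n fun y : ι → ℝ => 1 - ∑ i, y i ^ 2 := by fun_prop
  have hsq : ContDiffAt ℝ n (fun y : ι → ℝ => 1 + √(1 - ∑ i, y i ^ 2)) x :=
    contDiffAt_const.add (hq.contDiffAt.sqrt (by linarith))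
  rw [contDiffAt_pi]
  intro i
  rw [contDiffAt_pi]
  intro j
  simp only [sigmaSmooth, Matrix.sub_apply, Matrix.smul_apply, vecMulVec_apply, smul_eq_mul]
  exact contDiffAt_const.sub ((hsq.inv (by positivity)).mul (by fun_prop))

theorem exists_lipschitzOnWith_smul_sigmaMap {γ : ℝ → ℝ} {K : ℝ≥0}
    (hγ : LipschitzOnWith K γ (Icc 0 1)) {x : ι → ℝ} (hx : ∑ i, x i ^ 2 < 1) :
    ∃ ε > (0 : ℝ), ∃ K', LipschitzOnWith K' (fun y => γ (√(∑ i, y i ^ 2)) • sigmaMap y)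
      (ball x ε ∩ {y | ∑ i, y i ^ 2 < 1}) := by
  obtain ⟨Kσ, t, ht, hσ⟩ := (contDiffAt_sigmaSmooth hx (n := 1)).exists_lipschitzOnWith
  obtain ⟨ε, hε, hεt⟩ := Metric.mem_nhds_iff.mp ht
  obtain ⟨Kr, hr⟩ := exists_lipschitzWith_sqrt_sum_sq ι
  have hγr : LipschitzOnWith (K * Kr) (fun y : ι → ℝ => γ (√(∑ i, y i ^ 2)))
      (ball x ε ∩ {y | ∑ i, y i ^ 2 < 1}) :=
    hγ.comp hr.lipschitzOnWith fun y hy => ⟨Real.sqrt_nonneg _, Real.sqrt_le_one.mpr hy.2.le⟩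
  obtain ⟨K', hK'⟩ := hγr.exists_smul_of_isBounded (hσ.mono (inter_subset_left.trans hεt))
    (isBounded_ball.subset inter_subset_left)
  refine ⟨ε, hε, K', fun y hy z hz => ?_⟩
  simp only [sigmaMap_eq_sigmaSmooth hy.2.le, sigmaMap_eq_sigmaSmooth hz.2.le]
  exact hK' hy hz

theorem sum_sq_single (i : ι) (t : ℝ) : ∑ k, (Pi.single i t : ι → ℝ) k ^ 2 = t ^ 2 := by
  rw [Finset.sum_eq_single i (fun k _ hk => by simp [hk]) (by simp), Pi.single_eq_same]

theorem sigmaMap_single_apply_self (i : ι) {t : ℝ} (ht : t ^ 2 ≤ 1) :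
    sigmaMap (Pi.single i t) i i = √(1 - t ^ 2) := by
  simp only [sigmaMap_eq_sigmaSmooth ((sum_sq_single i t).trans_le ht), sigmaSmooth,
    sum_sq_single, Matrix.sub_apply, Matrix.smul_apply, vecMulVec_apply, Pi.single_eq_same,
    Matrix.one_apply_eq, smul_eq_mul]
  have hs : √(1 - t ^ 2) ^ 2 = 1 - t ^ 2 := Real.sq_sqrt (by linarith)
  field_simp
  nlinarith

theorem not_lipschitzOnWith_sqrt_one_sub_sq (K : ℝ≥0) :
    ¬ LipschitzOnWith K (fun t : ℝ => √(1 - t ^ 2)) (Icc 0 1) := by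
  intro hK
  set δ : ℝ := 1 / (K ^ 2 + 1)
  have hδ : δ * (K ^ 2 + 1) = 1 := div_mul_cancel₀ _ (by positivity)
  have hδ0 : 0 < δ := by positivity
  have hδ1 : δ ≤ 1 := by nlinarith [sq_nonneg (K : ℝ)]
  have hlip := hK.dist_le_mul (1 - δ) ⟨by linarith, by linarith⟩ 1 ⟨zero_le_one, le_rfl⟩
  simp only [Real.dist_eq, one_pow, sub_self, Real.sqrt_zero, sub_zero, sub_sub_cancel_left,
    abs_neg, abs_of_pos hδ0, abs_of_nonneg (Real.sqrt_nonneg _)] at hlip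
  -- square away the root: `2δ - δ² ≤ K²δ²` fails for `δ = 1 / (K² + 1)`
  have hsq := pow_le_pow_left₀ (Real.sqrt_nonneg _) hlip 2
  rw [Real.sq_sqrt (by nlinarith)] at hsq
  nlinarith

theorem not_lipschitzOnWith_sigmaMap [Nonempty ι] (K : ℝ≥0) :
    ¬ LipschitzOnWith K (sigmaMap (ι := ι)) {y | ∑ i, y i ^ 2 ≤ 1} := by
  intro hK
  obtain ⟨i⟩ := ‹Nonempty ι›
  have hsingle : LipschitzWith 1 (Pi.single (M := fun _ : ι => ℝ) i) :=
    .of_dist_le_mul fun a b => by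
      rw [dist_eq_norm, dist_eq_norm, ← Pi.single_sub, Pi.norm_single, NNReal.coe_one, one_mul]
  have hunit (t : ℝ) (ht : t ∈ Icc (0 : ℝ) 1) : t ^ 2 ≤ 1 := pow_le_one₀ ht.1 ht.2
  have hentry := (LipschitzWith.eval i).comp_lipschitzOnWith <|
    (LipschitzWith.eval i).comp_lipschitzOnWith <| hK.comp hsingle.lipschitzOnWith
      fun t ht => (sum_sq_single i t).trans_le (hunit t ht)
  simp only [one_mul, mul_one] at hentry
  refine not_lipschitzOnWith_sqrt_one_sub_sq K fun s hs t ht => ?_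
  simpa [sigmaMap_single_apply_self i (hunit s hs), sigmaMap_single_apply_self i (hunit t ht)]
    using hentry hs ht

end Sigma

theorem stmt8_general (n : ℕ) (hn : 1 ≤ n) (γ : ℝ → ℝ) (K : NNReal)
    (hγ : LipschitzOnWith K γ (Set.Icc 0 1))
    (σ : (Fin n → ℝ) → (Fin n → Fin n → ℝ))
    (hσ : σ = fun x => (1 : Matrix (Fin n) (Fin n) ℝ) -
      (if 0 < ∑ i, x i ^ 2 then
        (1 - Real.sqrt (1 - ∑ i, x i ^ 2)) / (∑ i, x i ^ 2) else 0) •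
        Matrix.vecMulVec x x)
    (F : (Fin n → ℝ) → (Fin n → Fin n → ℝ))
    (hF : F = fun x => γ (Real.sqrt (∑ i, x i ^ 2)) • σ x) :
    (∀ x : Fin n → ℝ, ∑ i, x i ^ 2 < 1 → ∃ ε > (0:ℝ), ∃ K' : NNReal,
      LipschitzOnWith K' F (Metric.ball x ε ∩ {y | ∑ i, y i ^ 2 < 1})) ∧
    ¬ ∃ K' : NNReal, LipschitzOnWith K' σ {y : Fin n → ℝ | ∑ i, y i ^ 2 ≤ 1} := by
  obtain rfl : σ = sigmaMap := hσ
  subst hF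
  have : Nonempty (Fin n) := ⟨⟨0, hn⟩⟩
  exact ⟨fun x hx => exists_lipschitzOnWith_smul_sigmaMap hγ hx,
    fun ⟨K', hK'⟩ => not_lipschitzOnWith_sigmaMap K' hK'⟩

/-- The function `x ↦ γ(|x|) σ(x)` (σ viewed entrywise, as a map into `Fin n → Fin n → ℝ`)
is locally Lipschitz on the open unit ball, but `σ` itself is not Lipschitz on the
closed unit ball when `n ≥ 1`. -/
theorem stmt8 (n : ℕ) (hn : 1 ≤ n) (γ : ℝ → ℝ) (K : NNReal)
    (hγ : LipschitzOnWith K γ (Set.Icc 0 1))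
    (hγpos : ∀ t ∈ Set.Icc (0:ℝ) 1, 0 < γ t)
    (σ : (Fin n → ℝ) → (Fin n → Fin n → ℝ))
    (hσ : σ = fun x => (1 : Matrix (Fin n) (Fin n) ℝ) -
      (if 0 < ∑ i, x i ^ 2 then
        (1 - Real.sqrt (1 - ∑ i, x i ^ 2)) / (∑ i, x i ^ 2) else 0) •
        Matrix.vecMulVec x x)
    (F : (Fin n → ℝ) → (Fin n → Fin n → ℝ))
    (hF : F = fun x => γ (Real.sqrt (∑ i, x i ^ 2)) • σ x) :
    (∀ x : Fin n → ℝ, ∑ i, x i ^ 2 < 1 → ∃ ε > (0:ℝ), ∃ K' : NNReal,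
      LipschitzOnWith K' F (Metric.ball x ε ∩ {y | ∑ i, y i ^ 2 < 1})) ∧
    ¬ ∃ K' : NNReal, LipschitzOnWith K' σ {y : Fin n → ℝ | ∑ i, y i ^ 2 ≤ 1} :=
  stmt8_general n hn γ K hγ σ hσ F hF
end

section
/- Let x, y ∈ R^n with 0 < |x| ≤ 1 and 0 < |y| ≤ 1, and let σ(x) = I - (1-√(1-|x|²)) x xᵀ/|x|². Then the squared Frobenius norm satisfies ‖σ(x) - σ(y)‖_F² = (√(1-|x|²) - √(1-|y|²))² + 2(1-√(1-|x|²))(1-√(1-|y|²)) (|x|²|y|² - (x·y)²)/(|x|²|y|²). -/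
/-! The identity matrices cancel, so `σ(x) - σ(y) = b yyᵀ - a xxᵀ`, whose squared Frobenius
norm is `a²|x|⁴ - 2ab(x·y)² + b²|y|⁴`. Since `a|x|² = 1 - √(1-|x|²)` and
`b|y|² = 1 - √(1-|y|²)`, what remains is polynomial algebra. -/

open Matrix

theorem sum_sq_smul_vecMulVec_sub_smul_vecMulVec {ι R : Type*} [Fintype ι] [CommRing R]
    (a b : R) (u v : ι → R) :
    ∑ i, ∑ j, (a • vecMulVec u u - b • vecMulVec v v) i j ^ 2
      = a ^ 2 * (u ⬝ᵥ u) ^ 2 - 2 * a * b * (u ⬝ᵥ v) ^ 2 + b ^ 2 * (v ⬝ᵥ v) ^ 2 := by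
  have hterm : ∀ i j, (a • vecMulVec u u - b • vecMulVec v v) i j ^ 2
      = a ^ 2 * (u i * u i) * (u j * u j) - 2 * a * b * (u i * v i) * (u j * v j)
        + b ^ 2 * (v i * v i) * (v j * v j) := by
    intro i j
    simp only [Matrix.sub_apply, Matrix.smul_apply, vecMulVec_apply, smul_eq_mul]
    ring
  simp only [hterm, Finset.sum_add_distrib, Finset.sum_sub_distrib, ← Finset.mul_sum,
    ← Finset.sum_mul, dotProduct]
  ring

theorem stmt12_general (n : ℕ) (x y : Fin n → ℝ)
    (hx0 : 0 < ∑ i, x i ^ 2)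
    (hy0 : 0 < ∑ i, y i ^ 2)
    (σx σy : Matrix (Fin n) (Fin n) ℝ)
    (hσx : σx = 1 - ((1 - Real.sqrt (1 - ∑ i, x i ^ 2)) / (∑ i, x i ^ 2)) •
        Matrix.vecMulVec x x)
    (hσy : σy = 1 - ((1 - Real.sqrt (1 - ∑ i, y i ^ 2)) / (∑ i, y i ^ 2)) •
        Matrix.vecMulVec y y) :
    ∑ i, ∑ j, (σx i j - σy i j) ^ 2
      = (Real.sqrt (1 - ∑ i, x i ^ 2) - Real.sqrt (1 - ∑ i, y i ^ 2)) ^ 2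
        + 2 * (1 - Real.sqrt (1 - ∑ i, x i ^ 2)) * (1 - Real.sqrt (1 - ∑ i, y i ^ 2))
          * ((∑ i, x i ^ 2) * (∑ i, y i ^ 2) - (∑ i, x i * y i) ^ 2)
          / ((∑ i, x i ^ 2) * (∑ i, y i ^ 2)) := by
  set a := (1 - Real.sqrt (1 - ∑ i, x i ^ 2)) / (∑ i, x i ^ 2)
  set b := (1 - Real.sqrt (1 - ∑ i, y i ^ 2)) / (∑ i, y i ^ 2)
  have hdiff : σx - σy = b • vecMulVec y y - a • vecMulVec x x := by
    rw [hσx, hσy]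
    abel
  calc ∑ i, ∑ j, (σx i j - σy i j) ^ 2
      = ∑ i, ∑ j, (b • vecMulVec y y - a • vecMulVec x x) i j ^ 2 := by
        rw [← hdiff]; rfl
    _ = a ^ 2 * (∑ i, x i ^ 2) ^ 2 - 2 * a * b * (∑ i, x i * y i) ^ 2
          + b ^ 2 * (∑ i, y i ^ 2) ^ 2 := by
        rw [sum_sq_smul_vecMulVec_sub_smul_vecMulVec, dotProduct_comm y x]
        simp only [dotProduct, sq]
        ring
    _ = _ := by
        have hX := hx0.ne'
        have hY := hy0.ne'
        simp only [a, b]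
        field_simp
        ring

/-- Frobenius norm identity: for `0 < |x| ≤ 1`, `0 < |y| ≤ 1`,
`‖σ(x) - σ(y)‖_F² = (√(1-|x|²) - √(1-|y|²))²
  + 2(1-√(1-|x|²))(1-√(1-|y|²)) (|x|²|y|² - (x·y)²)/(|x|²|y|²)`. -/
theorem stmt12 (n : ℕ) (x y : Fin n → ℝ)
    (hx0 : 0 < ∑ i, x i ^ 2) (hx1 : ∑ i, x i ^ 2 ≤ 1)
    (hy0 : 0 < ∑ i, y i ^ 2) (hy1 : ∑ i, y i ^ 2 ≤ 1)
    (σx σy : Matrix (Fin n) (Fin n) ℝ)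
    (hσx : σx = 1 - ((1 - Real.sqrt (1 - ∑ i, x i ^ 2)) / (∑ i, x i ^ 2)) •
        Matrix.vecMulVec x x)
    (hσy : σy = 1 - ((1 - Real.sqrt (1 - ∑ i, y i ^ 2)) / (∑ i, y i ^ 2)) •
        Matrix.vecMulVec y y) :
    ∑ i, ∑ j, (σx i j - σy i j) ^ 2
      = (Real.sqrt (1 - ∑ i, x i ^ 2) - Real.sqrt (1 - ∑ i, y i ^ 2)) ^ 2
        + 2 * (1 - Real.sqrt (1 - ∑ i, x i ^ 2)) * (1 - Real.sqrt (1 - ∑ i, y i ^ 2))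
          * ((∑ i, x i ^ 2) * (∑ i, y i ^ 2) - (∑ i, x i * y i) ^ 2)
          / ((∑ i, x i ^ 2) * (∑ i, y i ^ 2)) :=
  stmt12_general n x y hx0 hy0 σx σy hσx hσy
end
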